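/- Fix an integer n ≥ 2. Let T_1, …, T_n be independent random variables with T_i exponentially distributed with rate i, and let K be a random variable with values in {1, …, n−1}, independent of (T_1, …, T_n), with P(K = k) = 2(n+1)/((n−1)(k+2)(k+1)). Set τ^{(n)} = T_{K+1} + … + T_n. Then for every real y > −1 with y ≠ 1, E[exp(−y·τ^{(n)})] = (2 − (n+1)(y+1)·b_{n,y}) / ((n−1)(y−1)). -/

import Mathlib

/-!
Conditioning on `K`, which is independent of the `T i`, gives
`E[exp (-y τ)] = ∑ₖ P(K = k) ∏_{i=k+1}^n i / (y + i)`, since `i / (y + i)` is the Laplace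
transform of `Exp(i)` at `y` and Laplace transforms of independent summands multiply.
With `∏_{i=k+1}^n i / (y + i) = b_n / b_k` the sum becomes
`2 (n + 1) b_n / (n - 1) · ∑ₖ 1 / ((k + 1) (k + 2) b_k)`, and this last sum telescopes:
since `b_{k+1} = b_k (k + 1) / (y + k + 1)`, its terms are `F (k + 1) - F k` for
`F k = 1 / ((k + 1) b_k (y - 1))`.
-/

open MeasureTheory ProbabilityTheory Finset Real

lemma expMeasure_eq_withDensity (r : ℝ) :
    expMeasure r = volume.withDensity (exponentialPDF r) :=
  rfl

lemma measurable_exponentialPDF (r : ℝ) : Measurable (exponentialPDF r) :=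
  (measurable_exponentialPDFReal r).ennreal_ofReal

lemma toReal_exponentialPDF_smul_exp_mul {r : ℝ} (hr : 0 < r) (t : ℝ) :
    (fun x => (exponentialPDF r x).toReal • exp (t * x))
      = (Set.Ici 0).indicator fun x => r * exp (-((r - t) * x)) := by
  ext x
  by_cases hx : 0 ≤ x
  · rw [Set.indicator_of_mem (Set.mem_Ici.mpr hx), exponentialPDF_of_nonneg hx,
      ENNReal.toReal_ofReal (by positivity), smul_eq_mul, mul_assoc, ← exp_add]
    ring_nf
  · rw [Set.indicator_of_notMem (by simpa using hx), exponentialPDF_of_neg (not_le.mp hx)]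
    simp

lemma integrable_exp_mul_expMeasure {r t : ℝ} (hr : 0 < r) (ht : t < r) :
    Integrable (fun x => exp (t * x)) (expMeasure r) := by
  rw [expMeasure_eq_withDensity,
    integrable_withDensity_iff_integrable_smul' (measurable_exponentialPDF r)
      (.of_forall fun _ => ENNReal.ofReal_lt_top),
    toReal_exponentialPDF_smul_exp_mul hr, integrable_indicator_iff measurableSet_Ici,
    IntegrableOn, Measure.restrict_congr_set Ioi_ae_eq_Ici.symm]
  simpa only [neg_mul] using (exp_neg_integrableOn_Ioi 0 (sub_pos.mpr ht)).const_mul r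

lemma mgf_id_expMeasure {r t : ℝ} (hr : 0 < r) (ht : t < r) :
    mgf id (expMeasure r) t = r / (r - t) := by
  rw [mgf, expMeasure_eq_withDensity, integral_withDensity_eq_integral_toReal_smul
    (measurable_exponentialPDF r) (.of_forall fun _ => ENNReal.ofReal_lt_top)]
  simp only [id]
  rw [toReal_exponentialPDF_smul_exp_mul hr, integral_indicator measurableSet_Ici,
    integral_Ici_eq_integral_Ioi, integral_const_mul,
    integral_comp_mul_left_Ioi (fun u => exp (-u)) 0 (sub_pos.mpr ht), mul_zero,
    integral_exp_neg_Ioi_zero, smul_eq_mul, mul_one, div_eq_mul_inv]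

namespace ProbabilityTheory

variable {Ω ι : Type*} {mΩ : MeasurableSpace Ω} {μ : Measure Ω}

lemma mgf_of_map_eq_expMeasure {Y : Ω → ℝ} {r t : ℝ} (hY : AEMeasurable Y μ)
    (hmap : μ.map Y = expMeasure r) (hr : 0 < r) (ht : t < r) :
    mgf Y μ t = r / (r - t) := by
  rw [← mgf_id_map hY, hmap, mgf_id_expMeasure hr ht]

lemma integrable_exp_mul_of_map_eq_expMeasure {Y : Ω → ℝ} {r t : ℝ} (hY : AEMeasurable Y μ)
    (hmap : μ.map Y = expMeasure r) (hr : 0 < r) (ht : t < r) :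
    Integrable (fun ω => exp (t * Y ω)) μ := by
  have h := integrable_exp_mul_expMeasure hr ht
  rw [← hmap] at h
  exact h.comp_aemeasurable hY

section Exponential

variable {X : ι → Ω → ℝ} {r : ι → ℝ} {s : Finset ι} {t : ℝ}

lemma iIndepFun.integral_exp_mul_sum_of_map_eq_expMeasure (h_indep : iIndepFun X μ)
    (h_meas : ∀ i, Measurable (X i)) (hmap : ∀ i ∈ s, μ.map (X i) = expMeasure (r i))
    (hr : ∀ i ∈ s, 0 < r i) (ht : ∀ i ∈ s, t < r i) :
    ∫ ω, exp (t * ∑ i ∈ s, X i ω) ∂μ = ∏ i ∈ s, r i / (r i - t) := by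
  have h := h_indep.mgf_sum (t := t) h_meas s
  simp only [mgf, Finset.sum_apply] at h
  rw [h]
  exact prod_congr rfl fun i hi =>
    mgf_of_map_eq_expMeasure (h_meas i).aemeasurable (hmap i hi) (hr i hi) (ht i hi)

lemma iIndepFun.integrable_exp_mul_sum_of_map_eq_expMeasure [IsFiniteMeasure μ]
    (h_indep : iIndepFun X μ)
    (h_meas : ∀ i, Measurable (X i)) (hmap : ∀ i ∈ s, μ.map (X i) = expMeasure (r i))
    (hr : ∀ i ∈ s, 0 < r i) (ht : ∀ i ∈ s, t < r i) :
    Integrable (fun ω => exp (t * ∑ i ∈ s, X i ω)) μ := by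
  simpa only [Finset.sum_apply] using h_indep.integrable_exp_mul_sum h_meas fun i hi =>
    integrable_exp_mul_of_map_eq_expMeasure (h_meas i).aemeasurable (hmap i hi) (hr i hi) (ht i hi)

end Exponential

lemma IndepFun.integral_comp_eq_sum_measureReal_mul {E : Type*} [MeasurableSpace E]
    [MeasurableSpace ι] [MeasurableSingletonClass ι] {X : Ω → E} {K : Ω → ι}
    (hXK : IndepFun X K μ) (hK : Measurable K) {s : Finset ι} (hKs : ∀ ω, K ω ∈ s)
    {f : ι → E → ℝ} (hf : ∀ k ∈ s, Measurable (f k))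
    (hint : ∀ k ∈ s, Integrable (fun ω => f k (X ω)) μ) :
    ∫ ω, f (K ω) (X ω) ∂μ = ∑ k ∈ s, μ.real (K ⁻¹' {k}) * ∫ ω, f k (X ω) ∂μ := by
  have hsplit : ∀ ω,
      f (K ω) (X ω) = ∑ k ∈ s, (K ⁻¹' {k}).indicator (fun ω => f k (X ω)) ω := by
    intro ω
    rw [sum_eq_single_of_mem (K ω) (hKs ω) fun k _ hk =>
      Set.indicator_of_notMem (s := K ⁻¹' {k}) (fun h => hk h.symm) _]
    simp
  rw [integral_congr_ae (.of_forall hsplit),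
    integral_finsetSum _ fun k hk => (hint k hk).indicator (hK (measurableSet_singleton k))]
  refine sum_congr rfl fun k hk => ?_
  have hk1 : Measurable (({k} : Set ι).indicator (1 : ι → ℝ)) :=
    measurable_one.indicator (measurableSet_singleton k)
  have hind : (K ⁻¹' {k}).indicator (fun ω => f k (X ω))
      = (({k} : Set ι).indicator 1 ∘ K) * (f k ∘ X) := by
    ext ω
    by_cases h : K ω = k <;> simp [Set.indicator, h]
  have hKk : ∫ ω, (({k} : Set ι).indicator 1 ∘ K) ω ∂μ = μ.real (K ⁻¹' {k}) :=
    integral_indicator_one (hK (measurableSet_singleton k))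
  rw [hind, (hXK.comp (hf k hk) hk1).symm.integral_mul_eq_mul_integral
    (hk1.comp hK).aestronglyMeasurable (hint k hk).aestronglyMeasurable, hKk]
  rfl

end ProbabilityTheory

lemma sum_Icc_add_one_eq_sum_fin_filter {M : Type*} [AddCommMonoid M] (f : ℕ → M) (k n : ℕ) :
    ∑ i ∈ Icc (k + 1) n, f i = ∑ i : Fin n with k ≤ i.val, f (i + 1) := by
  rw [sum_filter, Fin.sum_univ_eq_sum_range (fun i => if k ≤ i then f (i + 1) else 0),
    ← sum_filter, ← Ico_add_one_right_eq_Icc, ← sum_Ico_add']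
  congr 1
  ext i
  simp only [mem_Ico, mem_filter, mem_range]
  omega

/-- The coefficient `b_{n,y}`. -/
noncomputable def yuleCoeff (y : ℝ) (n : ℕ) : ℝ := ∏ i ∈ Icc 1 n, (i : ℝ) / (y + i)

section YuleCoeff

variable {y : ℝ}

lemma yuleCoeff_succ (n : ℕ) :
    yuleCoeff y (n + 1) = yuleCoeff y n * ((n + 1) / (y + (n + 1))) := by
  rw [yuleCoeff, prod_Icc_succ_top (by omega), yuleCoeff]
  push_cast
  rfl

lemma yuleCoeff_pos (hy : -1 < y) (n : ℕ) : 0 < yuleCoeff y n :=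
  prod_pos fun i hi => by
    have : (1 : ℝ) ≤ i := by exact_mod_cast (mem_Icc.mp hi).1
    exact div_pos (by linarith) (by linarith)

lemma prod_Icc_add_one_eq_yuleCoeff_div (hy : -1 < y) {k n : ℕ} (hkn : k ≤ n) :
    ∏ i ∈ Icc (k + 1) n, (i : ℝ) / (y + i) = yuleCoeff y n / yuleCoeff y k := by
  have hIoc : ∀ m, Icc 1 m = Ioc 0 m := Icc_add_one_left_eq_Ioc 0
  rw [eq_div_iff (yuleCoeff_pos hy k).ne', yuleCoeff, yuleCoeff, mul_comm,
    Icc_add_one_left_eq_Ioc, hIoc, hIoc, prod_Ioc_consecutive _ k.zero_le hkn]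

lemma sum_Ico_inv_mul_yuleCoeff (hy : -1 < y) (hy1 : y ≠ 1) {n : ℕ} (hn : 1 ≤ n) :
    ∑ k ∈ Ico 1 n, (((k : ℝ) + 1) * (k + 2) * yuleCoeff y k)⁻¹
      = ((n + 1) * yuleCoeff y n)⁻¹ / (y - 1) - (y + 1) / (2 * (y - 1)) := by
  have hy1' : y - 1 ≠ 0 := sub_ne_zero.mpr hy1
  set F : ℕ → ℝ := fun k => (((k : ℝ) + 1) * yuleCoeff y k)⁻¹ / (y - 1)
  have hstep : ∀ k : ℕ, (((k : ℝ) + 1) * (k + 2) * yuleCoeff y k)⁻¹ = F (k + 1) - F k := by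
    intro k
    have hb := (yuleCoeff_pos hy k).ne'
    have hyk : y + (k + 1) ≠ 0 := by linarith [k.cast_nonneg (α := ℝ)]
    simp only [F, yuleCoeff_succ]
    push_cast
    field_simp
    ring
  have hF1 : F 1 = (y + 1) / (2 * (y - 1)) := by
    have hy' : y + 1 ≠ 0 := by linarith
    simp only [F, yuleCoeff, Icc_self, prod_singleton]
    field_simp
    ring
  rw [sum_congr rfl fun k _ => hstep k, sum_Ico_sub F hn, hF1]

lemma sum_mrcaWeight_mul_prod_eq (hy : -1 < y) (hy1 : y ≠ 1) {n : ℕ} (hn : 2 ≤ n) :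
    ∑ k ∈ Icc 1 (n - 1),
        2 * ((n : ℝ) + 1) / (((n : ℝ) - 1) * ((k : ℝ) + 2) * ((k : ℝ) + 1))
          * ∏ i ∈ Icc (k + 1) n, (i : ℝ) / (y + i)
      = (2 - ((n : ℝ) + 1) * (y + 1) * yuleCoeff y n) / (((n : ℝ) - 1) * (y - 1)) := by
  have hn1 : (n : ℝ) - 1 ≠ 0 := by
    have : (2 : ℝ) ≤ n := by exact_mod_cast hn
    linarith
  have hy1' : y - 1 ≠ 0 := sub_ne_zero.mpr hy1
  have hb := (yuleCoeff_pos hy n).ne'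
  have hterm : ∀ k ∈ Icc 1 (n - 1),
      2 * ((n : ℝ) + 1) / (((n : ℝ) - 1) * ((k : ℝ) + 2) * ((k : ℝ) + 1))
        * ∏ i ∈ Icc (k + 1) n, (i : ℝ) / (y + i)
      = 2 * (n + 1) * yuleCoeff y n / (n - 1)
          * (((k : ℝ) + 1) * (k + 2) * yuleCoeff y k)⁻¹ := by
    intro k hk
    rw [prod_Icc_add_one_eq_yuleCoeff_div hy (by grind)]
    field_simp
  rw [sum_congr rfl hterm, ← mul_sum, ← Ico_add_one_right_eq_Icc, Nat.sub_add_cancel (by omega),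
    sum_Ico_inv_mul_yuleCoeff hy hy1 (by omega)]
  field_simp

end YuleCoeff

section TailSum

variable {Ω : Type*} {mΩ : MeasurableSpace Ω} {μ : Measure Ω} {T : ℕ → Ω → ℝ} {n : ℕ}
  {y : ℝ}

lemma integral_exp_neg_mul_sum_Icc (hTmeas : ∀ i, Measurable (T i)) (hTindep : iIndepFun T μ)
    (hTexp : ∀ i ∈ Icc 1 n, μ.map (T i) = expMeasure i) (hy : -1 < y) (k : ℕ) :
    ∫ ω, exp (-y * ∑ i ∈ Icc (k + 1) n, T i ω) ∂μ
      = ∏ i ∈ Icc (k + 1) n, (i : ℝ) / (y + i) := by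
  have hone : ∀ i ∈ Icc (k + 1) n, (1 : ℝ) ≤ i := fun i hi => by
    exact_mod_cast (show 1 ≤ i by grind)
  rw [hTindep.integral_exp_mul_sum_of_map_eq_expMeasure hTmeas
    (fun i hi => hTexp i (Icc_subset_Icc_left (by omega) hi))
    (fun i hi => by linarith [hone i hi]) (fun i hi => by linarith [hone i hi])]
  simp only [sub_neg_eq_add, add_comm _ y]

lemma integrable_exp_neg_mul_sum_Icc [IsFiniteMeasure μ] (hTmeas : ∀ i, Measurable (T i))
    (hTindep : iIndepFun T μ) (hTexp : ∀ i ∈ Icc 1 n, μ.map (T i) = expMeasure i)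
    (hy : -1 < y) (k : ℕ) :
    Integrable (fun ω => exp (-y * ∑ i ∈ Icc (k + 1) n, T i ω)) μ := by
  have hone : ∀ i ∈ Icc (k + 1) n, (1 : ℝ) ≤ i := fun i hi => by
    exact_mod_cast (show 1 ≤ i by grind)
  exact hTindep.integrable_exp_mul_sum_of_map_eq_expMeasure hTmeas
    (fun i hi => hTexp i (Icc_subset_Icc_left (by omega) hi))
    (fun i hi => by linarith [hone i hi]) (fun i hi => by linarith [hone i hi])

end TailSum

/-- Laplace transform of the time `τ⁽ⁿ⁾ = T_{K+1} + … + T_n` to the most recent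
common ancestor of two randomly sampled tips of the Yule `n`-tree: for
`y > -1`, `y ≠ 1`,
`E[e^{−y·τ⁽ⁿ⁾}] = (2 − (n+1)(y+1) b_{n,y}) / ((n−1)(y−1))`,
where `b_{n,y} = ∏_{i=1}^n i/(y+i)`. -/
theorem statement6 {Ω : Type*} [MeasureSpace Ω] [IsProbabilityMeasure (ℙ : Measure Ω)]
    (n : ℕ) (hn : 2 ≤ n) (T : ℕ → Ω → ℝ) (K : Ω → ℕ)
    (hTmeas : ∀ i, Measurable (T i))
    (hTindep : iIndepFun T ℙ)
    (hTexp : ∀ i ∈ Finset.Icc 1 n, Measure.map (T i) ℙ = expMeasure i)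
    (hKmeas : Measurable K)
    (hKrange : ∀ ω, K ω ∈ Finset.Icc 1 (n - 1))
    (hKindep : IndepFun (fun ω (i : Fin n) => T (i + 1) ω) K ℙ)
    (hKdist : ∀ k ∈ Finset.Icc 1 (n - 1),
      ℙ {ω | K ω = k} = ENNReal.ofReal
        (2 * ((n : ℝ) + 1) / (((n : ℝ) - 1) * ((k : ℝ) + 2) * ((k : ℝ) + 1))))
    (y : ℝ) (hy : -1 < y) (hy1 : y ≠ 1) :
    ∫ ω, Real.exp (-y * ∑ i ∈ Finset.Icc (K ω + 1) n, T i ω) ∂ℙ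
      = (2 - ((n : ℝ) + 1) * (y + 1) * ∏ i ∈ Finset.Icc 1 n, (i : ℝ) / (y + i))
          / (((n : ℝ) - 1) * (y - 1)) := by
  -- `f k` computes `exp (-y (T (k+1) + ⋯ + T n))` from the vector that `K` is independent of.
  set f : ℕ → (Fin n → ℝ) → ℝ :=
    fun k v => exp (-y * ∑ i : Fin n with k ≤ i.val, v i)
  have hfT : ∀ k ω, f k (fun i : Fin n => T (i + 1) ω)
      = exp (-y * ∑ i ∈ Icc (k + 1) n, T i ω) :=
    fun k ω => by rw [sum_Icc_add_one_eq_sum_fin_filter]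
  have hK : ∀ k ∈ Icc 1 (n - 1), (ℙ : Measure Ω).real (K ⁻¹' {k})
      = 2 * ((n : ℝ) + 1) / (((n : ℝ) - 1) * ((k : ℝ) + 2) * ((k : ℝ) + 1)) := by
    intro k hk
    have : (2 : ℝ) ≤ n := by exact_mod_cast hn
    rw [measureReal_def, show K ⁻¹' {k} = {ω | K ω = k} from rfl, hKdist k hk,
      ENNReal.toReal_ofReal (div_nonneg (by positivity)
        (mul_nonneg (mul_nonneg (by linarith) (by positivity)) (by positivity)))]
  calc ∫ ω, exp (-y * ∑ i ∈ Icc (K ω + 1) n, T i ω) ∂ℙ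
      = ∫ ω, f (K ω) (fun i : Fin n => T (i + 1) ω) ∂ℙ := by simp only [hfT]
    _ = ∑ k ∈ Icc 1 (n - 1), (ℙ : Measure Ω).real (K ⁻¹' {k})
          * ∫ ω, f k (fun i : Fin n => T (i + 1) ω) ∂ℙ :=
      hKindep.integral_comp_eq_sum_measureReal_mul hKmeas hKrange (fun k _ => by fun_prop)
        fun k _ => by
          simpa only [hfT] using integrable_exp_neg_mul_sum_Icc hTmeas hTindep hTexp hy k
    _ = _ := by
      simp only [hfT, integral_exp_neg_mul_sum_Icc hTmeas hTindep hTexp hy]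
      rw [sum_congr rfl fun k hk => by rw [hK k hk]]
      exact sum_mrcaWeight_mul_prod_eq hy hy1 hn
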